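/- arXiv:1604.08841 — 2 statements merged into one kernel-verified Lean document; each statement's English description precedes it below -/
import Mathlib

section
/- Let A ⊆ ℝ^d have reach(A) > r > 0, and suppose S ⊆ ∂A ∩ B(a, r/2) is a set such that for every z ∈ S there exists a unit vector n_z ∈ Nor(A, z) with |v − n_z| < 1/4, where v is a fixed unit vector. Then, writing W := v^⊥ and identifying points x = w + t v (w ∈ W, t ∈ ℝ), the set S is the graph over W of a 3-Lipschitz function ψ defined on P := π_W(S). -/
open Metric Set Filter
open scoped ENNReal RealInnerProductSpace Topology NNReal

noncomputable section

variable {E : Type*} [NormedAddCommGroup E] [InnerProductSpace ℝ E]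

/-- `x` has a unique nearest point in `A`. -/
def UnpPt (A : Set E) (x : E) : Prop :=
  ∃! a, a ∈ A ∧ dist x a = Metric.infDist x A

/-- The reach of `A` at a point `a` (Federer). -/
def locReach (A : Set E) (a : E) : ℝ≥0∞ :=
  ⨆ (r : ℝ≥0) (_ : ∀ x : E, dist x a < (r : ℝ) → UnpPt A x), (r : ℝ≥0∞)

/-- The (global) reach of `A`. -/
def setReach (A : Set E) : ℝ≥0∞ := ⨅ a ∈ A, locReach A a

/-- The tangent cone of `A` at `a` in the sense of Federer. -/
def Tan (A : Set E) (a : E) : Set E :=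
  {u | u = 0 ∨ ∃ (x : ℕ → E) (r : ℕ → ℝ),
    (∀ i, x i ∈ A ∧ x i ≠ a ∧ 0 < r i) ∧
    Tendsto x atTop (nhds a) ∧
    Tendsto (fun i => r i • (x i - a)) atTop (nhds u)}

/-- The normal cone of `A` at `a`: the dual cone of the tangent cone. -/
def Nor (A : Set E) (a : E) : Set E :=
  {u | ∀ v ∈ Tan A a, ⟪u, v⟫ ≤ 0}

namespace Stmt18

variable {A : Set E} {r : ℝ}

lemma unp_of_reach (hre : ENNReal.ofReal r < setReach A) :
    ∀ w a, a ∈ A → dist w a < r → UnpPt A w := by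
  intro w a ha hd
  have h1 : ENNReal.ofReal r < locReach A a := lt_of_lt_of_le hre (iInf₂_le a ha)
  rw [locReach, lt_iSup_iff] at h1
  obtain ⟨r', h1⟩ := h1
  rw [lt_iSup_iff] at h1
  obtain ⟨hp, hlt⟩ := h1
  refine hp w ?_
  have hrr' : r < (r' : ℝ) := by
    by_contra hcon
    have h2 : (r' : ℝ≥0∞) ≤ ENNReal.ofReal r := by
      rw [← ENNReal.ofReal_coe_nnreal]
      exact ENNReal.ofReal_le_ofReal (not_lt.mp hcon)
    exact absurd hlt (not_lt.mpr h2)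
  exact lt_trans hd hrr'

lemma closed_of_unp (hr : 0 < r) (hu : ∀ w a, a ∈ A → dist w a < r → UnpPt A w) :
    IsClosed A := by
  rcases A.eq_empty_or_nonempty with hA | _
  · simp [hA]
  refine isClosed_of_closure_subset ?_
  intro x hx
  obtain ⟨a, ha, hd⟩ := Metric.mem_closure_iff.mp hx r hr
  obtain ⟨p, ⟨hpA, hpd⟩, -⟩ := hu x a ha hd
  have h0 : Metric.infDist x A = 0 := by
    rw [← Metric.infDist_closure]
    exact Metric.infDist_zero_of_mem hx
  rw [h0, dist_eq_zero] at hpd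
  rwa [hpd]

/-- Derivative of `w ↦ ‖w - c‖` away from `c`. -/
lemma hasFDerivAt_norm_sub (c : E) {x : E} (h : x ≠ c) :
    HasFDerivAt (fun w => ‖w - c‖) (innerSL ℝ (‖x - c‖⁻¹ • (x - c))) x := by
  have hsub : HasFDerivAt (fun w : E => w - c) (ContinuousLinearMap.id ℝ E) x :=
    (hasFDerivAt_id x).sub_const c
  have h2 := hsub.norm_sq
  have hxc : x - c ≠ 0 := sub_ne_zero.mpr h
  have hnorm : (0:ℝ) < ‖x - c‖ := norm_pos_iff.mpr hxc
  have hne : (‖x - c‖ ^ 2 : ℝ) ≠ 0 := by positivity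
  have h3 := (Real.hasDerivAt_sqrt hne).comp_hasFDerivAt x h2
  have heq : ((fun y => Real.sqrt y) ∘ fun w : E => ‖w - c‖ ^ 2) = fun w : E => ‖w - c‖ := by
    funext w
    simp only [Function.comp_apply]
    exact Real.sqrt_sq (norm_nonneg _)
  rw [heq] at h3
  refine h3.congr_fderiv ?_
  ext w
  simp only [innerSL_apply_apply, ContinuousLinearMap.smul_apply, ContinuousLinearMap.smul_apply,
    ContinuousLinearMap.coe_comp', Function.comp_apply, ContinuousLinearMap.coe_id', id_eq,
    real_inner_smul_left, smul_eq_mul]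
  rw [Real.sqrt_sq (norm_nonneg _)]
  field_simp
  ring

end Stmt18
set_option linter.unusedSectionVars false

namespace Stmt18

variable {E : Type*} [NormedAddCommGroup E] [InnerProductSpace ℝ E]
variable {A : Set E} {r : ℝ}

/-- The distance function to `A` is differentiable at points with a unique nearest point,
with derivative the unit vector pointing away from the foot. -/
lemma hasFDerivAt_infDist [ProperSpace E] (hA : IsClosed A) (hne : A.Nonempty)
    (hu : ∀ w a, a ∈ A → dist w a < r → UnpPt A w)
    {z p : E} (hp : p ∈ A) (hd : dist z p = Metric.infDist z A)
    (h0 : 0 < Metric.infDist z A) (hlt : Metric.infDist z A < r) :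
    HasFDerivAt (fun w => Metric.infDist w A)
      (innerSL ℝ ((Metric.infDist z A)⁻¹ • (z - p))) z := by
  set D := Metric.infDist z A with hD
  set ν := D⁻¹ • (z - p) with hν
  have hzp : ‖z - p‖ = D := by rw [← dist_eq_norm]; exact hd
  have hDne : D ≠ 0 := ne_of_gt h0
  have hν1 : ‖ν‖ = 1 := by
    rw [hν, norm_smul, norm_inv, Real.norm_eq_abs, abs_of_pos h0, hzp]
    field_simp
  rw [hasFDerivAt_iff_isLittleO_nhds_zero, Asymptotics.isLittleO_iff]
  intro c hc
  have upper : ∀ᶠ h in 𝓝 (0:E),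
      Metric.infDist (z + h) A - D - ⟪ν, h⟫ ≤ c * ‖h‖ := by
    have hR : (0:ℝ) < min (D/2) (c * D) := by positivity
    filter_upwards [Metric.ball_mem_nhds (0:E) hR] with h hh
    rw [mem_ball_zero_iff] at hh
    have hh1 : ‖h‖ < D/2 := lt_of_lt_of_le hh (min_le_left _ _)
    have hh2 : ‖h‖ < c * D := lt_of_lt_of_le hh (min_le_right _ _)
    set s := (⟪ν, h⟫ : ℝ) with hs
    set q := ‖h‖^2 / D with hq
    have hsabs : |s| ≤ ‖h‖ := by
      rw [hs]
      calc |(⟪ν, h⟫:ℝ)| ≤ ‖ν‖ * ‖h‖ := abs_real_inner_le_norm ν h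
      _ = ‖h‖ := by rw [hν1, one_mul]
    have hDs : D * s = ⟪z - p, h⟫ := by
      rw [hs, hν, real_inner_smul_left]
      field_simp
    have ha : 0 ≤ D + s + q := by
      have : -s ≤ ‖h‖ := by have := abs_le.mp hsabs; linarith [this.1]
      have hq0 : 0 ≤ q := by positivity
      linarith
    have hkey : Metric.infDist (z + h) A ≤ D + s + q := by
      have h1 : Metric.infDist (z + h) A ≤ ‖(z - p) + h‖ := by
        calc Metric.infDist (z + h) A ≤ dist (z + h) p := Metric.infDist_le_dist_of_mem hp
        _ = ‖(z - p) + h‖ := by rw [dist_eq_norm, add_sub_right_comm]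
      refine le_trans h1 ?_
      have hsq : ‖(z - p) + h‖^2 ≤ (D + s + q)^2 := by
        rw [norm_add_sq_real, hzp]
        have hq2 : q * D = ‖h‖^2 := by rw [hq]; field_simp
        nlinarith [sq_nonneg (s + q), sq_nonneg ‖h‖]
      calc ‖(z - p) + h‖ = Real.sqrt (‖(z - p) + h‖^2) := (Real.sqrt_sq (norm_nonneg _)).symm
      _ ≤ Real.sqrt ((D + s + q)^2) := Real.sqrt_le_sqrt hsq
      _ = D + s + q := Real.sqrt_sq ha
    have hqc : q ≤ c * ‖h‖ := by
      rw [hq, div_le_iff₀ h0]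
      calc ‖h‖^2 = ‖h‖ * ‖h‖ := sq ‖h‖
      _ ≤ ‖h‖ * (c * D) := by
          apply mul_le_mul_of_nonneg_left hh2.le (norm_nonneg _)
      _ = c * ‖h‖ * D := by ring
    have : ⟪ν, h⟫ = s := rfl
    linarith [hkey]
  have lower : ∀ᶠ h in 𝓝 (0:E),
      -(c * ‖h‖) ≤ Metric.infDist (z + h) A - D - ⟪ν, h⟫ := by
    by_contra hcon
    rw [Filter.not_eventually] at hcon
    have hseq : ∀ k : ℕ, ∃ h : E, ‖h‖ < 1/((k:ℝ)+1) ∧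
        Metric.infDist (z + h) A - D - ⟪ν, h⟫ < -(c * ‖h‖) := by
      intro k
      have hb : Metric.ball (0:E) (1/((k:ℝ)+1)) ∈ 𝓝 (0:E) :=
        Metric.ball_mem_nhds _ (by positivity)
      obtain ⟨h, hh1, hh2⟩ := Filter.frequently_iff.mp hcon hb
      exact ⟨h, mem_ball_zero_iff.mp hh1, not_le.mp hh2⟩
    choose hk hk1 hk2 using hseq
    have hk0 : ∀ k, hk k ≠ 0 := by
      intro k h0k
      have := hk2 k
      rw [h0k] at this
      simp [hD] at this
    have hfoot : ∀ k, ∃ q ∈ A, Metric.infDist (z + hk k) A = dist (z + hk k) q :=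
      fun k => hA.exists_infDist_eq_dist hne _
    choose pk hpkA hpkd using hfoot
    have hplow : ∀ k, D ≤ ‖z - pk k‖ := by
      intro k
      rw [← dist_eq_norm]
      exact Metric.infDist_le_dist_of_mem (hpkA k)
    have hzpk : ∀ k, z - pk k ≠ 0 := by
      intro k hzk
      have := hplow k
      rw [hzk, norm_zero] at this
      linarith
    set uk : ℕ → E := fun k => ‖z - pk k‖⁻¹ • (z - pk k) with huk
    have huk1 : ∀ k, ‖uk k‖ = 1 := by
      intro k
      have : (0:ℝ) < ‖z - pk k‖ := norm_pos_iff.mpr (hzpk k)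
      rw [huk]
      simp only []
      rw [norm_smul, norm_inv, Real.norm_eq_abs, abs_of_pos this]
      field_simp
    have hkey : ∀ k, D + ⟪uk k, hk k⟫ ≤ Metric.infDist (z + hk k) A := by
      intro k
      have hnp : (0:ℝ) < ‖z - pk k‖ := norm_pos_iff.mpr (hzpk k)
      have h1 : ⟪uk k, (z - pk k) + hk k⟫ ≤ ‖(z - pk k) + hk k‖ := by
        calc (⟪uk k, (z - pk k) + hk k⟫:ℝ) ≤ ‖uk k‖ * ‖(z - pk k) + hk k‖ :=
          real_inner_le_norm _ _
        _ = ‖(z - pk k) + hk k‖ := by rw [huk1 k, one_mul]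
      have h2 : (⟪uk k, (z - pk k) + hk k⟫:ℝ) = ‖z - pk k‖ + ⟪uk k, hk k⟫ := by
        rw [inner_add_right]
        congr 1
        rw [huk]
        simp only []
        rw [real_inner_smul_left, real_inner_self_eq_norm_sq]
        field_simp
      have h3 : Metric.infDist (z + hk k) A = ‖(z - pk k) + hk k‖ := by
        rw [hpkd k, dist_eq_norm, add_sub_right_comm]
      rw [h3]
      have := hplow k
      linarith [h1, h2.symm.le]
    have hcontr : ∀ k, c < ‖ν - uk k‖ := by
      intro k
      have h1 := hkey k
      have h2 := hk2 k
      have h3 : ⟪uk k - ν, hk k⟫ < -(c * ‖hk k‖) := by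
        have : ⟪uk k - ν, hk k⟫ = ⟪uk k, hk k⟫ - ⟪ν, hk k⟫ := inner_sub_left _ _ _
        linarith [this]
      have h4 : c * ‖hk k‖ < ⟪ν - uk k, hk k⟫ := by
        have : (⟪ν - uk k, hk k⟫:ℝ) = -⟪uk k - ν, hk k⟫ := by
          rw [← inner_neg_left]; congr 1; abel
        linarith [this]
      have h5 : (⟪ν - uk k, hk k⟫:ℝ) ≤ ‖ν - uk k‖ * ‖hk k‖ := real_inner_le_norm _ _
      have h6 : (0:ℝ) < ‖hk k‖ := norm_pos_iff.mpr (hk0 k)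
      nlinarith
    -- Now derive convergence and contradiction
    have htk : Tendsto (fun k : ℕ => 1/((k:ℝ)+1)) atTop (𝓝 0) :=
      tendsto_one_div_add_atTop_nhds_zero_nat
    have hhk0 : Tendsto hk atTop (𝓝 0) :=
      squeeze_zero_norm (fun k => (hk1 k).le) htk
    have hzhk : Tendsto (fun k => z + hk k) atTop (𝓝 z) := by
      have := tendsto_const_nhds (x := z) (f := atTop (α := ℕ)) |>.add hhk0
      simpa using this
    have hdk : Tendsto (fun k => Metric.infDist (z + hk k) A) atTop (𝓝 D) := by
      have := ((continuous_infDist_pt A).tendsto z).comp hzhk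
      exact this
    have hnk : Tendsto (fun k => ‖z - pk k‖) atTop (𝓝 D) := by
      refine tendsto_of_tendsto_of_tendsto_of_le_of_le (g := fun _ => D)
        (h := fun k => Metric.infDist (z + hk k) A + ‖hk k‖)
        tendsto_const_nhds (by simpa using hdk.add hhk0.norm)
        (fun k => hplow k) ?_
      intro k
      have h12 : ‖z - pk k‖ ≤ ‖(z + hk k) - pk k‖ + ‖hk k‖ := by
        have h7 : z - pk k = ((z + hk k) - pk k) - hk k := by abel
        rw [h7]
        exact norm_sub_le _ _
      have h13 : ‖(z + hk k) - pk k‖ = Metric.infDist (z + hk k) A := by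
        rw [hpkd k, dist_eq_norm]
      show ‖z - pk k‖ ≤ Metric.infDist (z + hk k) A + ‖hk k‖
      rw [← h13]
      exact h12
    have hmem : ∀ k, pk k ∈ Metric.closedBall z (D + 2) := by
      intro k
      rw [Metric.mem_closedBall, dist_comm, dist_eq_norm]
      have h8 : ‖z - pk k‖ ≤ Metric.infDist (z + hk k) A + ‖hk k‖ := by
        have h7 : z - pk k = ((z + hk k) - pk k) - hk k := by abel
        rw [h7, hpkd k, dist_eq_norm]
        exact norm_sub_le _ _
      have h9 : Metric.infDist (z + hk k) A ≤ D + ‖hk k‖ := by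
        have := Metric.infDist_le_infDist_add_dist (x := z + hk k) (y := z) (s := A)
        rw [dist_eq_norm] at this
        simpa using this
      have h10 : ‖hk k‖ ≤ 1 := by
        have := (hk1 k).le
        have h11 : 1/((k:ℝ)+1) ≤ 1 := by
          rw [div_le_one (by positivity)]
          linarith [Nat.cast_nonneg (α := ℝ) k]
        linarith
      linarith
    obtain ⟨q, hq, φ, hφ, hpq⟩ :=
      (isCompact_closedBall z (D + 2)).tendsto_subseq hmem
    have hqA : q ∈ A := hA.mem_of_tendsto hpq (Filter.Eventually.of_forall fun k => hpkA (φ k))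
    have hzq : ‖z - q‖ = D := by
      have h1 : Tendsto (fun k => ‖z - pk (φ k)‖) atTop (𝓝 ‖z - q‖) :=
        ((tendsto_const_nhds (x := z)).sub hpq).norm
      have h2 : Tendsto (fun k => ‖z - pk (φ k)‖) atTop (𝓝 D) :=
        hnk.comp hφ.tendsto_atTop
      exact tendsto_nhds_unique h1 h2
    have hqp : q = p := by
      obtain ⟨w, hw, huniq⟩ := hu z p hp (by rw [hd]; exact hlt)
      have e1 : q = w := huniq q ⟨hqA, by rw [dist_eq_norm]; exact hzq⟩
      have e2 : p = w := huniq p ⟨hp, hd⟩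
      rw [e1, e2]
    have hukt : Tendsto (fun k => uk (φ k)) atTop (𝓝 ν) := by
      have h1 : Tendsto (fun k => ‖z - pk (φ k)‖) atTop (𝓝 D) := hnk.comp hφ.tendsto_atTop
      have h2 : Tendsto (fun k => (‖z - pk (φ k)‖)⁻¹) atTop (𝓝 D⁻¹) := h1.inv₀ hDne
      have h3 : Tendsto (fun k => z - pk (φ k)) atTop (𝓝 (z - q)) :=
        (tendsto_const_nhds (x := z)).sub hpq
      have h4 := h2.smul h3
      rw [hqp] at h4
      exact h4
    have hd0 : Tendsto (fun k => ‖ν - uk (φ k)‖) atTop (𝓝 0) := by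
      have := ((tendsto_const_nhds (x := ν)).sub hukt).norm
      simpa using this
    have : ∀ᶠ k in atTop, ‖ν - uk (φ k)‖ < c := hd0.eventually (eventually_lt_nhds hc)
    obtain ⟨k, hkk⟩ := this.exists
    exact absurd (hcontr (φ k)) (not_lt.mpr hkk.le)
  filter_upwards [upper, lower] with h h1 h2
  rw [Real.norm_eq_abs, abs_le]
  constructor
  · simpa using h2
  · simpa using h1

end Stmt18
namespace Stmt18

variable {E : Type*} [NormedAddCommGroup E] [InnerProductSpace ℝ E]
variable {A : Set E} {r : ℝ}

/-- Variational step: from any point in the tube one can gain distance at almost unit rate. -/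
lemma step_lemma [ProperSpace E] (hA : IsClosed A) (hne : A.Nonempty)
    (hu : ∀ w a, a ∈ A → dist w a < r → UnpPt A w)
    {ρ K T : ℝ} (hρr : ρ < r) (hK0 : 0 < K) (hK1 : K < 1)
    {z : E} (h0 : 0 < Metric.infDist z A) (hT : 0 < T)
    (hle : Metric.infDist z A + T ≤ ρ) :
    ∃ z', ‖z' - z‖ ≤ T ∧ Metric.infDist z A + K * T < Metric.infDist z' A := by
  set D := Metric.infDist z A with hD
  obtain ⟨p, hpA, hpd⟩ := hA.exists_infDist_eq_dist hne z
  have hDr : D < r := by linarith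
  have hDp : HasFDerivAt (fun w => Metric.infDist w A) (innerSL ℝ (D⁻¹ • (z - p))) z :=
    hasFDerivAt_infDist hA hne hu hpA hpd.symm h0 hDr
  set ν := D⁻¹ • (z - p) with hν
  have hzp : ‖z - p‖ = D := by rw [← dist_eq_norm]; exact hpd.symm
  have hν1 : ‖ν‖ = 1 := by
    rw [hν, norm_smul, norm_inv, Real.norm_eq_abs, abs_of_pos h0, hzp]
    field_simp
  have hline : HasDerivAt (fun t : ℝ => z + t • ν) ν 0 := by
    simpa using ((hasDerivAt_id (0:ℝ)).smul_const ν).const_add z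
  have hDz : HasFDerivAt (fun w => Metric.infDist w A) (innerSL ℝ ν) (z + (0:ℝ) • ν) := by
    simpa using hDp
  have hg : HasDerivAt (fun t : ℝ => Metric.infDist (z + t • ν) A) 1 0 := by
    have := hDz.comp_hasDerivAt 0 hline
    simpa [real_inner_self_eq_norm_sq, hν1, Function.comp_def] using this
  have hslope : Tendsto (slope (fun t : ℝ => Metric.infDist (z + t • ν) A) 0)
      (𝓝[>] 0) (𝓝 1) := by
    have := hasDerivAt_iff_tendsto_slope.mp hg
    exact this.mono_left (nhdsWithin_mono 0 fun t ht => ne_of_gt ht)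
  have ev1 : ∀ᶠ t in 𝓝[>] (0:ℝ),
      K < slope (fun t : ℝ => Metric.infDist (z + t • ν) A) 0 t :=
    hslope.eventually (eventually_gt_nhds hK1)
  have ev2 : ∀ᶠ t in 𝓝[>] (0:ℝ), t < T :=
    (eventually_lt_nhds hT).filter_mono nhdsWithin_le_nhds
  have ev3 : ∀ᶠ t in 𝓝[>] (0:ℝ), 0 < t := eventually_mem_nhdsWithin
  obtain ⟨t, hts, htT, ht0⟩ := (ev1.and (ev2.and ev3)).exists
  have hgain : D + K * t < Metric.infDist (z + t • ν) A := by
    have hsl : slope (fun t : ℝ => Metric.infDist (z + t • ν) A) 0 t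
        = (Metric.infDist (z + t • ν) A - D) / t := by
      rw [slope_def_field]
      simp [hD]
    rw [hsl] at hts
    rw [lt_div_iff₀ ht0] at hts
    linarith
  -- maximize F over the closed ball
  set F : E → ℝ := fun w => Metric.infDist w A - K * ‖w - z‖ with hF
  have hFcont : ContinuousOn F (Metric.closedBall z T) := by
    apply Continuous.continuousOn
    exact (continuous_infDist_pt A).sub (continuous_const.mul ((continuous_id.sub continuous_const).norm))
  obtain ⟨z', hz'mem, hz'max⟩ := (isCompact_closedBall z T).exists_isMaxOn
    ⟨z, Metric.mem_closedBall_self hT.le⟩ hFcont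
  have htmem : z + t • ν ∈ Metric.closedBall z T := by
    rw [Metric.mem_closedBall, dist_eq_norm]
    have : ‖z + t • ν - z‖ = t := by
      rw [add_sub_cancel_left, norm_smul, Real.norm_eq_abs, abs_of_pos ht0, hν1, mul_one]
    rw [this]
    exact htT.le
  have hFt : D < F (z + t • ν) := by
    rw [hF]
    simp only []
    have h1 : ‖z + t • ν - z‖ = t := by
      rw [add_sub_cancel_left, norm_smul, Real.norm_eq_abs, abs_of_pos ht0, hν1, mul_one]
    rw [h1]
    nlinarith
  have hFz' : D < F z' := lt_of_lt_of_le hFt (hz'max htmem)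
  have hz'ne : z' ≠ z := by
    intro hzz
    rw [hzz, hF] at hFz'
    simp [hD] at hFz'
  have hz'D : D < Metric.infDist z' A := by
    have : F z' ≤ Metric.infDist z' A := by
      rw [hF]
      simp only []
      have : 0 ≤ K * ‖z' - z‖ := by positivity
      linarith
    linarith
  have hz'dist : ‖z' - z‖ ≤ T := by
    have := hz'mem
    rwa [Metric.mem_closedBall, dist_eq_norm] at this
  have hz'r : Metric.infDist z' A < r := by
    have h1 : Metric.infDist z' A ≤ D + ‖z' - z‖ := by
      have := Metric.infDist_le_infDist_add_dist (x := z') (y := z) (s := A)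
      rw [dist_eq_norm] at this
      exact this
    linarith
  -- z' must lie on the sphere
  have hsphere : ‖z' - z‖ = T := by
    by_contra hcon
    have hlt' : ‖z' - z‖ < T := lt_of_le_of_ne hz'dist hcon
    -- interior local max: derivative of F is zero, contradiction
    have hlocmax : IsLocalMax F z' := by
      have hball : Metric.ball z T ∈ 𝓝 z' := by
        apply Metric.isOpen_ball.mem_nhds
        rw [Metric.mem_ball, dist_eq_norm]
        exact hlt'
      refine Filter.eventually_of_mem hball ?_
      intro w hw
      exact hz'max (Metric.ball_subset_closedBall hw)
    obtain ⟨p', hp'A, hp'd⟩ := hA.exists_infDist_eq_dist hne z'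
    have h0' : 0 < Metric.infDist z' A := lt_trans h0 hz'D
    have hD' : HasFDerivAt (fun w => Metric.infDist w A)
        (innerSL ℝ ((Metric.infDist z' A)⁻¹ • (z' - p'))) z' :=
      hasFDerivAt_infDist hA hne hu hp'A hp'd.symm h0' hz'r
    have hN' : HasFDerivAt (fun w : E => ‖w - z‖)
        (innerSL ℝ (‖z' - z‖⁻¹ • (z' - z))) z' :=
      hasFDerivAt_norm_sub z (sub_ne_zero.mp (by
        intro hzz
        exact hz'ne (by rwa [sub_eq_zero] at hzz)))
    have hFd : HasFDerivAt F
        (innerSL ℝ ((Metric.infDist z' A)⁻¹ • (z' - p'))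
          - K • innerSL ℝ (‖z' - z‖⁻¹ • (z' - z))) z' := by
      rw [hF]
      exact hD'.sub (hN'.const_mul K)
    have hzero := hlocmax.hasFDerivAt_eq_zero hFd
    set ν' := (Metric.infDist z' A)⁻¹ • (z' - p') with hν'
    set u' := ‖z' - z‖⁻¹ • (z' - z) with hu'
    have hν'1 : ‖ν'‖ = 1 := by
      have hzp' : ‖z' - p'‖ = Metric.infDist z' A := by rw [← dist_eq_norm]; exact hp'd.symm
      rw [hν', norm_smul, norm_inv, Real.norm_eq_abs, abs_of_pos h0', hzp']
      field_simp
    have hu'1 : ‖u'‖ = 1 := by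
      have hzz : (0:ℝ) < ‖z' - z‖ := by
        rw [norm_pos_iff, sub_ne_zero]
        exact hz'ne
      rw [hu', norm_smul, norm_inv, Real.norm_eq_abs, abs_of_pos hzz]
      field_simp
    have happ := congrArg (fun (L : E →L[ℝ] ℝ) => L ν') hzero
    simp only [ContinuousLinearMap.sub_apply, ContinuousLinearMap.smul_apply,
      innerSL_apply_apply, ContinuousLinearMap.zero_apply, smul_eq_mul] at happ
    have h1 : (⟪ν', ν'⟫:ℝ) = 1 := by
      rw [real_inner_self_eq_norm_sq, hν'1]; norm_num
    have h2 : (⟪u', ν'⟫:ℝ) ≤ 1 := by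
      calc (⟪u', ν'⟫:ℝ) ≤ ‖u'‖ * ‖ν'‖ := real_inner_le_norm _ _
      _ = 1 := by rw [hu'1, hν'1, mul_one]
    nlinarith [happ, h1, h2]
  refine ⟨z', le_of_eq hsphere, ?_⟩
  have : F z' = Metric.infDist z' A - K * T := by rw [hF]; simp only []; rw [hsphere]
  have hFz'' : D < Metric.infDist z' A - K * T := by rw [← this]; exact hFz'
  linarith

end Stmt18
namespace Stmt18

variable {E : Type*} [NormedAddCommGroup E] [InnerProductSpace ℝ E]
variable {A : Set E} {r : ℝ}

lemma reach_up [ProperSpace E] (hA : IsClosed A) (hne : A.Nonempty)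
    (hu : ∀ w a, a ∈ A → dist w a < r → UnpPt A w)
    {ρ K : ℝ} (hρr : ρ < r) (hK0 : 0 < K) (hK1 : K < 1) {z : E}
    (h0 : 0 < Metric.infDist z A) (hz : Metric.infDist z A < ρ) :
    ∀ ε > 0, ∃ w, ρ - ε ≤ Metric.infDist w A ∧ Metric.infDist w A ≤ ρ ∧
      ‖w - z‖ ≤ (ρ - Metric.infDist z A) / K := by
  have main : ∀ n : ℕ, ∃ w, 0 < Metric.infDist w A ∧ Metric.infDist w A < ρ ∧
      ρ - Metric.infDist w A ≤ (ρ - Metric.infDist z A) * (1 - K/2)^n ∧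
      ‖w - z‖ ≤ (Metric.infDist w A - Metric.infDist z A) / K := by
    intro n
    induction n with
    | zero =>
      refine ⟨z, h0, hz, by simp, ?_⟩
      simp
    | succ n ih =>
      obtain ⟨w, hw0, hwρ, hwgeo, hwpos⟩ := ih
      set T := (ρ - Metric.infDist w A) / 2 with hT
      have hT0 : 0 < T := by rw [hT]; linarith
      have hTle : Metric.infDist w A + T ≤ ρ := by rw [hT]; linarith
      obtain ⟨w', hw'd, hw'g⟩ := step_lemma hA hne hu hρr hK0 hK1 hw0 hT0 hTle
      have hw'lip : Metric.infDist w' A ≤ Metric.infDist w A + T := by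
        have := Metric.infDist_le_infDist_add_dist (x := w') (y := w) (s := A)
        rw [dist_eq_norm] at this
        linarith
      have hw'0 : 0 < Metric.infDist w' A := by nlinarith
      have hTe : T = (ρ - Metric.infDist w A) / 2 := hT
      have hw'ρ : Metric.infDist w' A < ρ := by linarith
      refine ⟨w', hw'0, hw'ρ, ?_, ?_⟩
      · have h1 : ρ - Metric.infDist w' A ≤ (ρ - Metric.infDist w A) * (1 - K/2) := by
          nlinarith [hw'g, hTe]
        have h2 : (0:ℝ) ≤ 1 - K/2 := by linarith
        calc ρ - Metric.infDist w' A ≤ (ρ - Metric.infDist w A) * (1 - K/2) := h1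
        _ ≤ ((ρ - Metric.infDist z A) * (1 - K/2)^n) * (1 - K/2) := by
            apply mul_le_mul_of_nonneg_right hwgeo h2
        _ = (ρ - Metric.infDist z A) * (1 - K/2)^(n+1) := by ring
      · have h1 : ‖w' - z‖ ≤ ‖w' - w‖ + ‖w - z‖ := norm_sub_le_norm_sub_add_norm_sub _ _ _
        have h2 : T ≤ (Metric.infDist w' A - Metric.infDist w A) / K := by
          rw [le_div_iff₀ hK0]
          nlinarith
        calc ‖w' - z‖ ≤ ‖w' - w‖ + ‖w - z‖ := h1
        _ ≤ T + (Metric.infDist w A - Metric.infDist z A) / K := add_le_add hw'd hwpos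
        _ ≤ (Metric.infDist w' A - Metric.infDist w A) / K
            + (Metric.infDist w A - Metric.infDist z A) / K := by linarith
        _ = (Metric.infDist w' A - Metric.infDist z A) / K := by ring
  intro ε hε
  have hbase : (0:ℝ) ≤ 1 - K/2 := by linarith
  have hlt1 : 1 - K/2 < 1 := by linarith
  have hρz : 0 < ρ - Metric.infDist z A := by linarith
  obtain ⟨n, hn⟩ := exists_pow_lt_of_lt_one (x := ε / (ρ - Metric.infDist z A)) (by positivity) hlt1
  obtain ⟨w, hw0, hwρ, hwgeo, hwpos⟩ := main n
  refine ⟨w, ?_, hwρ.le, ?_⟩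
  · have h1 : (ρ - Metric.infDist z A) * (1 - K/2)^n < ε := by
      rw [← lt_div_iff₀' hρz]
      exact hn
    linarith
  · calc ‖w - z‖ ≤ (Metric.infDist w A - Metric.infDist z A) / K := hwpos
    _ ≤ (ρ - Metric.infDist z A) / K := (div_le_div_iff_of_pos_right hK0).mpr (by linarith)

end Stmt18
namespace Stmt18

variable {E : Type*} [NormedAddCommGroup E] [InnerProductSpace ℝ E]
variable {A : Set E} {r : ℝ}

/-- Federer's extension property: a normal direction realized at some positive length
extends to any length `ρ < r`. -/
lemma extend_normal [ProperSpace E] (hA : IsClosed A) (hne : A.Nonempty)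
    (hu : ∀ w a, a ∈ A → dist w a < r → UnpPt A w)
    {b ν : E} (hb : b ∈ A) (hν : ‖ν‖ = 1) {m ρ : ℝ}
    (hm0 : 0 < m) (hmρ : m ≤ ρ) (hρr : ρ < r)
    (hanch : Metric.infDist (b + m • ν) A = m) :
    Metric.infDist (b + ρ • ν) A = ρ := by
  rcases eq_or_lt_of_le hmρ with heq | hmρ'
  · rwa [← heq]
  set L := ρ - m with hL
  have hL0 : 0 < L := by rw [hL]; linarith
  set z₀ := b + m • ν with hz₀
  -- a sequence of good points
  have hwk : ∀ k : ℕ, ∃ w, ρ - 1/((k:ℝ)+1) ≤ Metric.infDist w A ∧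
      Metric.infDist w A ≤ ρ ∧ ‖w - z₀‖ ≤ L + 1/((k:ℝ)+1) := by
    intro k
    set ε := 1/((k:ℝ)+1) with hε
    have hε0 : 0 < ε := by positivity
    set K := L / (L + ε) with hK
    have hK0 : 0 < K := by positivity
    have hK1 : K < 1 := by
      rw [hK, div_lt_one (by positivity)]
      linarith
    have h0 : 0 < Metric.infDist z₀ A := by rw [hz₀, hanch]; exact hm0
    have hzρ : Metric.infDist z₀ A < ρ := by rw [hz₀, hanch]; exact hmρ'
    obtain ⟨w, hw1, hw2, hw3⟩ := reach_up hA hne hu hρr hK0 hK1 h0 hzρ ε hε0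
    refine ⟨w, hw1, hw2, ?_⟩
    have : (ρ - Metric.infDist z₀ A) / K = L + ε := by
      rw [hz₀, hanch, hK, hL]
      field_simp
    rwa [this] at hw3
  choose wk hwk1 hwk2 hwk3 using hwk
  have hεto : Tendsto (fun k : ℕ => 1/((k:ℝ)+1)) atTop (𝓝 0) :=
    tendsto_one_div_add_atTop_nhds_zero_nat
  have hε1 : ∀ k : ℕ, 1/((k:ℝ)+1) ≤ 1 := by
    intro k
    rw [div_le_one (by positivity)]
    linarith [Nat.cast_nonneg (α := ℝ) k]
  have hmem : ∀ k, wk k ∈ Metric.closedBall z₀ (L + 1) := by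
    intro k
    rw [Metric.mem_closedBall, dist_eq_norm]
    linarith [hwk3 k, hε1 k]
  obtain ⟨Z, hZmem, φ, hφ, hZt⟩ := (isCompact_closedBall z₀ (L + 1)).tendsto_subseq hmem
  -- infDist Z A = ρ
  have hdZ : Metric.infDist Z A = ρ := by
    have h1 : Tendsto (fun k => Metric.infDist (wk (φ k)) A) atTop (𝓝 (Metric.infDist Z A)) :=
      ((continuous_infDist_pt A).tendsto Z).comp hZt
    have h2 : Metric.infDist Z A ≤ ρ :=
      le_of_tendsto h1 (Filter.Eventually.of_forall fun k => hwk2 (φ k))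
    have h3 : ρ ≤ Metric.infDist Z A := by
      refine le_of_tendsto_of_tendsto' (f := fun k : ℕ => ρ - 1/((φ k : ℝ)+1)) ?_ h1
        (fun k => hwk1 (φ k))
      have : Tendsto (fun k : ℕ => 1/((φ k : ℝ)+1)) atTop (𝓝 0) :=
        hεto.comp hφ.tendsto_atTop
      have := (tendsto_const_nhds (x := ρ)).sub this
      simpa using this
    linarith
  have hZz₀ : ‖Z - z₀‖ ≤ L := by
    have h1 : Tendsto (fun k => ‖wk (φ k) - z₀‖) atTop (𝓝 ‖Z - z₀‖) :=
      (hZt.sub tendsto_const_nhds).norm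
    refine le_of_tendsto_of_tendsto' h1 (f := fun k => ‖wk (φ k) - z₀‖)
      (g := fun k : ℕ => L + 1/((φ k : ℝ)+1)) ?_ (fun k => hwk3 (φ k))
    have : Tendsto (fun k : ℕ => 1/((φ k : ℝ)+1)) atTop (𝓝 0) :=
      hεto.comp hφ.tendsto_atTop
    have := (tendsto_const_nhds (x := L)).add this
    simpa using this
  -- rigidity: Z = b + ρ • ν
  have hZb_ge : ρ ≤ ‖Z - b‖ := by
    rw [← hdZ, ← dist_eq_norm]
    exact Metric.infDist_le_dist_of_mem hb
  have hZb_le : ‖Z - b‖ ≤ ρ := by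
    have h1 : Z - b = (Z - z₀) + m • ν := by rw [hz₀]; abel
    calc ‖Z - b‖ = ‖(Z - z₀) + m • ν‖ := by rw [h1]
    _ ≤ ‖Z - z₀‖ + ‖m • ν‖ := norm_add_le _ _
    _ = ‖Z - z₀‖ + m := by rw [norm_smul, Real.norm_eq_abs, abs_of_pos hm0, hν, mul_one]
    _ ≤ L + m := by linarith
    _ = ρ := by rw [hL]; ring
  have hZz₀_ge : L ≤ ‖Z - z₀‖ := by
    have h1 : Metric.infDist Z A ≤ Metric.infDist z₀ A + ‖Z - z₀‖ := by
      have := Metric.infDist_le_infDist_add_dist (x := Z) (y := z₀) (s := A)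
      rw [dist_eq_norm] at this
      exact this
    rw [hdZ] at h1
    rw [hz₀, hanch] at h1
    linarith
  have hZz₀eq : ‖Z - z₀‖ = L := le_antisymm hZz₀ hZz₀_ge
  have hZbeq : ‖Z - b‖ = ρ := le_antisymm hZb_le hZb_ge
  have hinner : (⟪Z - z₀, ν⟫:ℝ) = L := by
    have h1 : Z - b = (Z - z₀) + m • ν := by rw [hz₀]; abel
    have h2 : ‖Z - b‖^2 = ‖Z - z₀‖^2 + 2 * (m * ⟪Z - z₀, ν⟫) + m^2 := by
      rw [h1, norm_add_sq_real, real_inner_smul_right]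
      have hmn : ‖m • ν‖ = m := by
        rw [norm_smul, Real.norm_eq_abs, abs_of_pos hm0, hν, mul_one]
      rw [hmn]
    rw [hZbeq, hZz₀eq] at h2
    have hρLm : ρ = L + m := by rw [hL]; ring
    nlinarith [h2]
  have hZeq : Z = b + ρ • ν := by
    have h2 : ‖(Z - z₀) - L • ν‖^2 = 0 := by
      rw [norm_sub_sq_real, real_inner_smul_right, hinner, hZz₀eq]
      rw [norm_smul, Real.norm_eq_abs, abs_of_pos hL0, hν, mul_one]
      ring
    have h3 : (Z - z₀) - L • ν = 0 := by
      have := sq_eq_zero_iff.mp h2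
      exact norm_eq_zero.mp this
    have h4 : Z = z₀ + L • ν := by
      have := sub_eq_zero.mp h3
      rw [sub_eq_iff_eq_add] at this
      rw [this]
      abel
    rw [h4, hz₀]
    have hsum : m • ν + L • ν = ρ • ν := by
      rw [← add_smul]
      congr 1
      rw [hL]
      ring
    rw [add_assoc, hsum]
  rw [← hZeq]
  exact hdZ

/-- The proximal inequality at scale `ρ`. -/
lemma prox_of_extend {b ν : E} {ρ : ℝ} (hρ : 0 < ρ)
    (hex : Metric.infDist (b + ρ • ν) A = ρ) (hν : ‖ν‖ = 1) :
    ∀ y ∈ A, (⟪ν, y - b⟫:ℝ) ≤ ‖y - b‖^2 / (2*ρ) := by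
  intro y hy
  have h1 : ρ ≤ dist (b + ρ • ν) y := by
    have := Metric.infDist_le_dist_of_mem (x := b + ρ • ν) hy
    rwa [hex] at this
  have h2 : dist (b + ρ • ν) y = ‖ρ • ν - (y - b)‖ := by
    rw [dist_eq_norm]
    congr 1
    abel
  rw [h2] at h1
  have hrn : ‖ρ • ν‖ = ρ := by
    rw [norm_smul, Real.norm_eq_abs, abs_of_pos hρ, hν, mul_one]
  have h3 : ‖ρ • ν - (y - b)‖^2 = ρ^2 - 2*(ρ * ⟪ν, y - b⟫) + ‖y - b‖^2 := by
    rw [norm_sub_sq_real, real_inner_smul_left, hrn]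
  have h4 : ρ^2 ≤ ‖ρ • ν - (y - b)‖^2 := by
    apply sq_le_sq' ?_ h1
    linarith [norm_nonneg (ρ • ν - (y - b))]
  rw [h3] at h4
  rw [le_div_iff₀ (by linarith)]
  nlinarith

end Stmt18
namespace Stmt18

variable {E : Type*} [NormedAddCommGroup E] [InnerProductSpace ℝ E]
variable {A : Set E} {r : ℝ}

/-- Federer's quadratic inequality for normal vectors (Thm 4.8(7)). -/
lemma nor_quadratic [ProperSpace E] (hA : IsClosed A) (hne : A.Nonempty)
    (hu : ∀ w a, a ∈ A → dist w a < r → UnpPt A w)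
    {ρ : ℝ} (hρ0 : 0 < ρ) (hρr : ρ < r)
    {x n : E} (hx : x ∈ A) (hn : n ∈ Nor A x) (hn1 : ‖n‖ = 1) :
    ∀ y ∈ A, (⟪n, y - x⟫:ℝ) ≤ ‖y - x‖^2 / (2*ρ) := by
  have hnn : (⟪n, n⟫:ℝ) = 1 := by
    rw [real_inner_self_eq_norm_sq, hn1]; norm_num
  have key : ∀ ε > 0, ∃ c νv, c ∈ A ∧ ‖νv‖ = 1 ∧ ‖c - x‖ ≤ ε ∧ ‖νv - n‖ ≤ ε ∧
      Metric.infDist (c + ρ • νv) A = ρ := by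
    by_contra hcon
    push_neg at hcon
    obtain ⟨ε₀, hε₀, hbad₀⟩ := hcon
    set ε := min ε₀ 1 with hεdef
    have hε : 0 < ε := lt_min hε₀ one_pos
    have hε1 : ε ≤ 1 := min_le_right _ _
    have hbad : ∀ c νv, c ∈ A → ‖νv‖ = 1 → ‖c - x‖ ≤ ε → ‖νv - n‖ ≤ ε →
        Metric.infDist (c + ρ • νv) A ≠ ρ := by
      intro c νv h1 h2 h3 h4
      exact hbad₀ c νv h1 h2 (le_trans h3 (min_le_left _ _)) (le_trans h4 (min_le_left _ _))
    set t : ℕ → ℝ := fun k => min (ε/2) (min (ρ/2) (1/((k:ℝ)+1))) with ht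
    have ht0 : ∀ k, 0 < t k :=
      fun k => lt_min (by positivity) (lt_min (by positivity) (by positivity))
    have htε : ∀ k, t k ≤ ε/2 := fun k => min_le_left _ _
    have htρ : ∀ k, t k ≤ ρ/2 := fun k => le_trans (min_le_right _ _) (min_le_left _ _)
    have htk : ∀ k, t k ≤ 1/((k:ℝ)+1) :=
      fun k => le_trans (min_le_right _ _) (min_le_right _ _)
    have hwdist : ∀ k, dist (x + (t k) • n) x = t k := by
      intro k
      rw [dist_eq_norm, add_sub_cancel_left, norm_smul, Real.norm_eq_abs,
        abs_of_pos (ht0 k), hn1, mul_one]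
    have hδle : ∀ k, Metric.infDist (x + (t k) • n) A ≤ t k := by
      intro k
      calc Metric.infDist (x + (t k) • n) A ≤ dist (x + (t k) • n) x :=
        Metric.infDist_le_dist_of_mem hx
      _ = t k := hwdist k
    have hδlt : ∀ k, Metric.infDist (x + (t k) • n) A < t k := by
      intro k
      rcases lt_or_eq_of_le (hδle k) with h | h
      · exact h
      · exfalso
        have hext := extend_normal hA hne hu hx hn1 (ht0 k)
          (by linarith [htρ k]) hρr h
        exact hbad x n hx hn1 (by simp [hε.le]) (by simp [hε.le]) hext
    have hfoot : ∀ k, ∃ q ∈ A, Metric.infDist (x + (t k) • n) A = dist (x + (t k) • n) q :=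
      fun k => hA.exists_infDist_eq_dist hne _
    choose pk hpkA hpkd using hfoot
    have hpne : ∀ k, pk k ≠ x := by
      intro k hkx
      have h1 := hpkd k
      rw [hkx, hwdist k] at h1
      exact absurd h1 (ne_of_lt (hδlt k))
    have hdk0 : ∀ k, (0:ℝ) < ‖pk k - x‖ := by
      intro k
      rw [norm_pos_iff, sub_ne_zero]
      exact hpne k
    have hd2t : ∀ k, ‖pk k - x‖ ≤ 2 * t k := by
      intro k
      have h1 : ‖pk k - x‖ ≤ ‖pk k - (x + (t k) • n)‖ + ‖(x + (t k) • n) - x‖ :=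
        norm_sub_le_norm_sub_add_norm_sub _ _ _
      have h2 : ‖(x + (t k) • n) - x‖ = t k := by rw [← dist_eq_norm]; exact hwdist k
      have h3 : ‖pk k - (x + (t k) • n)‖ = Metric.infDist (x + (t k) • n) A := by
        rw [hpkd k, dist_eq_norm, norm_sub_rev]
      rw [h2, h3] at h1
      linarith [hδlt k]
    have hβ : ∀ k, (ε^2/2) * t k ≤ ⟪pk k - x, n⟫ := by
      intro k
      rcases eq_or_lt_of_le (Metric.infDist_nonneg (x := x + (t k) • n) (s := A)) with h0 | h0
      · -- the point x + t k • n lies in A and is its own foot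
        have hpw : pk k = x + (t k) • n := by
          have h1 := hpkd k
          rw [← h0, eq_comm, dist_eq_zero] at h1
          rw [h1]
        have hth : (⟪pk k - x, n⟫:ℝ) = t k := by
          rw [hpw, add_sub_cancel_left, real_inner_smul_left, hnn, mul_one]
        rw [hth]
        have hf : (0:ℝ) ≤ 1 - ε^2/2 := by nlinarith
        nlinarith [mul_nonneg hf (ht0 k).le]
      · -- genuine proximal foot: extend its normal and use hbad
        have hδne : Metric.infDist (x + (t k) • n) A ≠ 0 := ne_of_gt h0
        have hwp : ‖(x + (t k) • n) - pk k‖ = Metric.infDist (x + (t k) • n) A := by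
          rw [← dist_eq_norm]; exact (hpkd k).symm
        have hνk1 : ‖(Metric.infDist (x + (t k) • n) A)⁻¹ • ((x + (t k) • n) - pk k)‖ = 1 := by
          rw [norm_smul, norm_inv, Real.norm_eq_abs, abs_of_pos h0, hwp]
          exact inv_mul_cancel₀ hδne
        have hanch : Metric.infDist (pk k + (Metric.infDist (x + (t k) • n) A) •
            ((Metric.infDist (x + (t k) • n) A)⁻¹ • ((x + (t k) • n) - pk k))) A
            = Metric.infDist (x + (t k) • n) A := by
          rw [smul_smul, mul_inv_cancel₀ hδne, one_smul]
          congr 1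
          abel
        have hext := extend_normal hA hne hu (hpkA k) hνk1 h0
          (by linarith [hδlt k, htρ k]) hρr hanch
        have hpx : ‖pk k - x‖ ≤ ε := by linarith [hd2t k, htε k]
        have hνn : ε < ‖(Metric.infDist (x + (t k) • n) A)⁻¹ •
            ((x + (t k) • n) - pk k) - n‖ := by
          by_contra hcc
          exact hbad (pk k) _ (hpkA k) hνk1 hpx (not_lt.mp hcc) hext
        set νk := (Metric.infDist (x + (t k) • n) A)⁻¹ • ((x + (t k) • n) - pk k) with hνkdef
        have hinner : (⟪νk, n⟫:ℝ) < 1 - ε^2/2 := by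
          have h1 : ‖νk - n‖^2 = 2 - 2*⟪νk, n⟫ := by
            rw [norm_sub_sq_real, hνk1, hn1]
            ring
          have h2 : ε^2 < ‖νk - n‖^2 := by
            nlinarith [norm_nonneg (νk - n), hνn]
          nlinarith
        have hip : (⟪νk, n⟫:ℝ) =
            (Metric.infDist (x + (t k) • n) A)⁻¹ * (t k - ⟪pk k - x, n⟫) := by
          rw [hνkdef, real_inner_smul_left]
          congr 1
          have hthis : (x + (t k) • n) - pk k = (t k) • n - (pk k - x) := by abel
          rw [hthis, inner_sub_left, real_inner_smul_left, hnn, mul_one]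
        rw [hip] at hinner
        have h3 : t k - ⟪pk k - x, n⟫ < (Metric.infDist (x + (t k) • n) A) * (1 - ε^2/2) := by
          have h4 := (inv_mul_lt_iff₀ h0).mp hinner
          linarith [h4]
        have h5 := hδlt k
        have h6 : (0:ℝ) ≤ 1 - ε^2/2 := by nlinarith
        nlinarith
    have hukmem : ∀ k, ‖pk k - x‖⁻¹ • (pk k - x) ∈ Metric.sphere (0:E) 1 := by
      intro k
      rw [mem_sphere_zero_iff_norm, norm_smul, norm_inv, Real.norm_eq_abs,
        abs_of_pos (hdk0 k)]
      exact inv_mul_cancel₀ (ne_of_gt (hdk0 k))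
    have hukn : ∀ k, ε^2/4 ≤ ⟪n, ‖pk k - x‖⁻¹ • (pk k - x)⟫ := by
      intro k
      rw [real_inner_smul_right]
      have h2 := hβ k
      have h3 := hd2t k
      have h4 := hdk0 k
      have h5 := ht0 k
      have h8 : ε^2/4 * ‖pk k - x‖ ≤ (⟪pk k - x, n⟫:ℝ) := by nlinarith [sq_nonneg ε]
      have h9 : (⟪n, pk k - x⟫:ℝ) = ⟪pk k - x, n⟫ := real_inner_comm _ _
      rw [h9]
      calc ε^2/4 = (ε^2/4 * ‖pk k - x‖) / ‖pk k - x‖ := by field_simp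
      _ ≤ (⟪pk k - x, n⟫:ℝ) / ‖pk k - x‖ := (div_le_div_iff_of_pos_right h4).mpr h8
      _ = ‖pk k - x‖⁻¹ * ⟪pk k - x, n⟫ := by rw [div_eq_inv_mul]
    obtain ⟨u, humem, φ, hφ, hut⟩ := (isCompact_sphere (0:E) 1).tendsto_subseq
      (x := fun k => ‖pk k - x‖⁻¹ • (pk k - x)) hukmem
    have htto : Tendsto (fun k : ℕ => 1/((k:ℝ)+1)) atTop (𝓝 0) :=
      tendsto_one_div_add_atTop_nhds_zero_nat
    have httφ : Tendsto (fun i : ℕ => 1/((φ i : ℝ)+1)) atTop (𝓝 0) :=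
      htto.comp hφ.tendsto_atTop
    have hpkto : Tendsto (fun i => pk (φ i)) atTop (𝓝 x) := by
      have h1 : Tendsto (fun i => pk (φ i) - x) atTop (𝓝 0) := by
        refine squeeze_zero_norm (fun i => ?_) (by simpa using httφ.const_mul 2)
        calc ‖pk (φ i) - x‖ ≤ 2 * t (φ i) := hd2t (φ i)
        _ ≤ 2 * (1/((φ i : ℝ)+1)) := by linarith [htk (φ i)]
        _ = 2 * ((φ i : ℝ)+1)⁻¹ := by rw [one_div]
      have := h1.add (tendsto_const_nhds (x := x))
      simpa using this
    have hTan : u ∈ Tan A x := by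
      refine Or.inr ⟨fun i => pk (φ i), fun i => ‖pk (φ i) - x‖⁻¹, ?_, hpkto, hut⟩
      intro i
      exact ⟨hpkA (φ i), hpne (φ i), inv_pos.mpr (hdk0 (φ i))⟩
    have hle := hn u hTan
    have hge : ε^2/4 ≤ ⟪n, u⟫ := by
      have h1 : Tendsto (fun i => (⟪n, ‖pk (φ i) - x‖⁻¹ • (pk (φ i) - x)⟫:ℝ)) atTop
          (𝓝 ⟪n, u⟫) := (tendsto_const_nhds (x := n)).inner hut
      exact ge_of_tendsto h1 (Filter.Eventually.of_forall fun i => hukn (φ i))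
    nlinarith [hge, hle, sq_nonneg ε, hε]
  -- now pass to the limit in the proximal inequality
  intro y hy
  choose ck νk hc1 hc2 hc3 hc4 hc5 using fun k : ℕ => key (1/((k:ℝ)+1)) (by positivity)
  have htto : Tendsto (fun k : ℕ => 1/((k:ℝ)+1)) atTop (𝓝 0) :=
    tendsto_one_div_add_atTop_nhds_zero_nat
  have hckt : Tendsto ck atTop (𝓝 x) := by
    have h1 : Tendsto (fun k => ck k - x) atTop (𝓝 0) := squeeze_zero_norm hc3 htto
    have := h1.add (tendsto_const_nhds (x := x))
    simpa using this
  have hνkt : Tendsto νk atTop (𝓝 n) := by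
    have h1 : Tendsto (fun k => νk k - n) atTop (𝓝 0) := squeeze_zero_norm hc4 htto
    have := h1.add (tendsto_const_nhds (x := n))
    simpa using this
  have hineq : ∀ k, (⟪νk k, y - ck k⟫:ℝ) ≤ ‖y - ck k‖^2 / (2*ρ) :=
    fun k => prox_of_extend hρ0 (hc5 k) (hc2 k) y hy
  have hLHS : Tendsto (fun k => (⟪νk k, y - ck k⟫:ℝ)) atTop (𝓝 ⟪n, y - x⟫) :=
    hνkt.inner ((tendsto_const_nhds (x := y)).sub hckt)
  have hRHS : Tendsto (fun k => ‖y - ck k‖^2 / (2*ρ)) atTop (𝓝 (‖y - x‖^2 / (2*ρ))) := by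
    have h1 : Tendsto (fun k => ‖y - ck k‖) atTop (𝓝 ‖y - x‖) :=
      ((tendsto_const_nhds (x := y)).sub hckt).norm
    exact (h1.pow 2).div_const (2*ρ)
  exact le_of_tendsto_of_tendsto' hLHS hRHS hineq

end Stmt18
/-- A subset of the boundary of a set of reach > r whose unit normals stay 1/4-close to a
fixed unit vector v is the graph, over v^⊥, of a 3-Lipschitz function. -/
theorem stmt18 {d : ℕ} (A : Set (EuclideanSpace ℝ (Fin d))) (r : ℝ) (hr : 0 < r)
    (hreach : ENNReal.ofReal r < setReach A)
    (a v : EuclideanSpace ℝ (Fin d)) (hv : ‖v‖ = 1)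
    (S : Set (EuclideanSpace ℝ (Fin d)))
    (hS : S ⊆ frontier A ∩ ball a (r / 2))
    (hnor : ∀ z ∈ S, ∃ n ∈ Nor A z, ‖n‖ = 1 ∧ ‖v - n‖ < 1 / 4) :
    ∃ ψ : EuclideanSpace ℝ (Fin d) → ℝ,
      LipschitzOnWith 3 ψ ((fun x => x - ⟪x, v⟫ • v) '' S) ∧
      ∀ x ∈ S, ψ (x - ⟪x, v⟫ • v) = ⟪x, v⟫ := by
  have hu0 : ∀ w b, b ∈ A → dist w b < r → UnpPt A w := Stmt18.unp_of_reach hreach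
  have hA : IsClosed A := Stmt18.closed_of_unp hr hu0
  rcases S.eq_empty_or_nonempty with hSe | hSne
  · refine ⟨fun _ => 0, ?_, ?_⟩
    · rw [hSe, Set.image_empty]
      exact lipschitzOnWith_empty _ _
    · intro x hx
      rw [hSe] at hx
      exact absurd hx (Set.notMem_empty x)
  obtain ⟨x₀, hx₀⟩ := hSne
  have hSsub : S ⊆ A := by
    intro z hz
    have h1 := (hS hz).1
    have h2 : z ∈ closure A := frontier_subset_closure h1
    rwa [hA.closure_eq] at h2
  have hne : A.Nonempty := ⟨x₀, hSsub hx₀⟩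
  have hρ0 : (0:ℝ) < (9/10) * r := by linarith
  have hρr : (9/10) * r < r := by linarith
  -- the key directional estimate between two points of S
  have key : ∀ x ∈ S, ∀ y ∈ S, (⟪y - x, v⟫:ℝ) ≤ (29/36) * ‖y - x‖ := by
    intro x hx y hy
    obtain ⟨n, hnNor, hn1, hnv⟩ := hnor x hx
    have hLr : ‖y - x‖ < r := by
      have h1 : dist y a < r/2 := (hS hy).2
      have h2 : dist x a < r/2 := (hS hx).2
      have h3 : dist y x < r := by
        calc dist y x ≤ dist y a + dist a x := dist_triangle y a x
        _ = dist y a + dist x a := by rw [dist_comm a x]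
        _ < r := by linarith
      rw [← dist_eq_norm]
      exact h3
    have hquad := Stmt18.nor_quadratic hA hne hu0 hρ0 hρr (hSsub hx) hnNor hn1 y (hSsub hy)
    have h1 : ‖y - x‖^2/(2*((9/10) * r)) ≤ (5/9) * ‖y - x‖ := by
      rw [div_le_iff₀ (by positivity)]
      nlinarith [norm_nonneg (y - x)]
    have h2 : (⟪y - x, v - n⟫:ℝ) ≤ (1/4) * ‖y - x‖ := by
      calc (⟪y - x, v - n⟫:ℝ) ≤ ‖y - x‖ * ‖v - n‖ := real_inner_le_norm _ _
      _ ≤ ‖y - x‖ * (1/4) := mul_le_mul_of_nonneg_left hnv.le (norm_nonneg _)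
      _ = (1/4) * ‖y - x‖ := by ring
    have h3 : (⟪y - x, v⟫:ℝ) = ⟪n, y - x⟫ + ⟪y - x, v - n⟫ := by
      have e1 : (⟪y - x, v - n⟫:ℝ) = ⟪y - x, v⟫ - ⟪y - x, n⟫ := inner_sub_right _ _ _
      have e2 : (⟪n, y - x⟫:ℝ) = ⟪y - x, n⟫ := real_inner_comm _ _
      rw [e1, e2]
      ring
    rw [h3]
    linarith
  -- the Lipschitz-type estimate on vertical components
  have key2 : ∀ x ∈ S, ∀ y ∈ S,
      |(⟪y, v⟫:ℝ) - ⟪x, v⟫| ≤ 3 * ‖(y - ⟪y, v⟫ • v) - (x - ⟪x, v⟫ • v)‖ := by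
    intro x hx y hy
    have htt2 : (⟪y - x, v⟫:ℝ) = ⟪y, v⟫ - ⟪x, v⟫ := inner_sub_left _ _ _
    have hb1 : (⟪y, v⟫:ℝ) - ⟪x, v⟫ ≤ (29/36) * ‖y - x‖ := by
      rw [← htt2]; exact key x hx y hy
    have hb2 : -((⟪y, v⟫:ℝ) - ⟪x, v⟫) ≤ (29/36) * ‖y - x‖ := by
      have h5 := key y hy x hx
      have h6 : (⟪x - y, v⟫:ℝ) = -((⟪y, v⟫:ℝ) - ⟪x, v⟫) := by
        rw [inner_sub_left]; ring
      rw [h6] at h5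
      rwa [norm_sub_rev] at h5
    have habs : |(⟪y, v⟫:ℝ) - ⟪x, v⟫| ≤ (29/36) * ‖y - x‖ :=
      abs_le.mpr ⟨by linarith, hb1⟩
    have hwe : (y - ⟪y, v⟫ • v) - (x - ⟪x, v⟫ • v)
        = (y - x) - ((⟪y, v⟫:ℝ) - ⟪x, v⟫) • v := by
      rw [sub_smul]
      abel
    have hvv : (⟪v, v⟫:ℝ) = 1 := by
      rw [real_inner_self_eq_norm_sq, hv]; norm_num
    have hw2 : ‖(y - ⟪y, v⟫ • v) - (x - ⟪x, v⟫ • v)‖^2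
        = ‖y - x‖^2 - ((⟪y, v⟫:ℝ) - ⟪x, v⟫)^2 := by
      rw [hwe, norm_sub_sq_real, real_inner_smul_right, htt2, norm_smul,
        Real.norm_eq_abs, hv, mul_one, sq_abs]
      ring
    have h9 : ((⟪y, v⟫:ℝ) - ⟪x, v⟫)^2 ≤ 9 * ‖(y - ⟪y, v⟫ • v) - (x - ⟪x, v⟫ • v)‖^2 := by
      have h10 : ((⟪y, v⟫:ℝ) - ⟪x, v⟫)^2 ≤ ((29/36) * ‖y - x‖)^2 := by
        nlinarith [mul_self_le_mul_self (abs_nonneg ((⟪y, v⟫:ℝ) - ⟪x, v⟫)) habs,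
          sq_abs ((⟪y, v⟫:ℝ) - ⟪x, v⟫)]
      nlinarith [norm_nonneg (y - x), hw2]
    calc |(⟪y, v⟫:ℝ) - ⟪x, v⟫| = Real.sqrt (((⟪y, v⟫:ℝ) - ⟪x, v⟫)^2) :=
      (Real.sqrt_sq_eq_abs _).symm
    _ ≤ Real.sqrt (9 * ‖(y - ⟪y, v⟫ • v) - (x - ⟪x, v⟫ • v)‖^2) := Real.sqrt_le_sqrt h9
    _ = 3 * ‖(y - ⟪y, v⟫ • v) - (x - ⟪x, v⟫ • v)‖ := by
        rw [show (9:ℝ) * ‖(y - ⟪y, v⟫ • v) - (x - ⟪x, v⟫ • v)‖^2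
          = (3 * ‖(y - ⟪y, v⟫ • v) - (x - ⟪x, v⟫ • v)‖)^2 by ring]
        exact Real.sqrt_sq (by positivity)
  -- construct ψ via a choice of preimages
  refine ⟨fun p => ⟪Function.invFunOn (fun z => z - ⟪z, v⟫ • v) S p, v⟫, ?_, ?_⟩
  · refine LipschitzOnWith.of_dist_le_mul ?_
    intro p hp q hq
    obtain ⟨xp, hxp, hxpe⟩ := hp
    obtain ⟨yq, hyq, hyqe⟩ := hq
    set x' := Function.invFunOn (fun z => z - ⟪z, v⟫ • v) S p with hx'
    set y' := Function.invFunOn (fun z => z - ⟪z, v⟫ • v) S q with hy'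
    have hx'S : x' ∈ S := Function.invFunOn_mem ⟨xp, hxp, hxpe⟩
    have hy'S : y' ∈ S := Function.invFunOn_mem ⟨yq, hyq, hyqe⟩
    have hx'e : x' - ⟪x', v⟫ • v = p :=
      Function.invFunOn_eq (f := fun z => z - ⟪z, v⟫ • v) ⟨xp, hxp, hxpe⟩
    have hy'e : y' - ⟪y', v⟫ • v = q :=
      Function.invFunOn_eq (f := fun z => z - ⟪z, v⟫ • v) ⟨yq, hyq, hyqe⟩
    have h1 := key2 y' hy'S x' hx'S
    rw [hx'e, hy'e] at h1
    have hcoe : ((3:ℝ≥0):ℝ) = 3 := by norm_num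
    rw [Real.dist_eq, hcoe, dist_eq_norm]
    exact h1
  · intro x hx
    have hmem : ∃ b ∈ S, (fun z => z - ⟪z, v⟫ • v) b = x - ⟪x, v⟫ • v := ⟨x, hx, rfl⟩
    set x' := Function.invFunOn (fun z => z - ⟪z, v⟫ • v) S (x - ⟪x, v⟫ • v) with hx'
    have hx'S : x' ∈ S := Function.invFunOn_mem hmem
    have hx'e : x' - ⟪x', v⟫ • v = x - ⟪x, v⟫ • v :=
      Function.invFunOn_eq (f := fun z => z - ⟪z, v⟫ • v) hmem
    have h1 := key2 x hx x' hx'S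
    rw [hx'e, sub_self, norm_zero, mul_zero] at h1
    have h2 : (⟪x', v⟫:ℝ) - ⟪x, v⟫ = 0 := by
      have := abs_nonneg ((⟪x', v⟫:ℝ) - ⟪x, v⟫)
      have h3 : |(⟪x', v⟫:ℝ) - ⟪x, v⟫| = 0 := le_antisymm h1 this
      exact abs_eq_zero.mp h3
    show (⟪x', v⟫:ℝ) = ⟪x, v⟫
    linarith
end
end

section
/- Let X be a finite-dimensional Hilbert space, P ⊆ X a nonempty bounded set, K ≥ 0, c > 0, and ψ : P → ℝ a Lipschitz function such that for each p ∈ P there exists h_p ∈ X* with ‖h_p‖ ≤ K and ψ(p + Δ) − ψ(p) − h_p(Δ) ≤ c|Δ|² whenever Δ ≠ 0 and p + Δ ∈ P. Then there exists a Lipschitz semiconcave function F on X with F restricted to P equal to ψ. -/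
/-!
Every point `p ∈ P` carries the upper model `m_p x = ψ p + h_p (x - p) + c q(‖x - p‖)`, where
`q t = t²` up to `t = diam P` and continues affinely with slope `2 diam P`. The hypothesis says
exactly that `m_p ≥ ψ` on `P`, with equality at `p`, so `F = inf_p m_p` extends `ψ`. Each
`m_p x - c ‖x‖²` is an affine function minus the convex `c max(‖x - p‖ - diam P, 0)²`, hence
concave, and each `m_p` is `(K + 2 c diam P)`-Lipschitz; both properties pass to the infimum.
-/

open Set
open scoped NNReal

noncomputable section

section Infimum

variable {ι α E : Type*}

theorem bddBelow_range_of_le_add_mul [PseudoMetricSpace α] {f : ι → α → ℝ} {C : ℝ}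
    (hf : ∀ i x y, f i x ≤ f i y + C * dist x y) {x₀ : α}
    (h₀ : BddBelow (range fun i => f i x₀)) (x : α) : BddBelow (range fun i => f i x) := by
  obtain ⟨m, hm⟩ := h₀
  refine ⟨m - C * dist x₀ x, ?_⟩
  rintro _ ⟨i, rfl⟩
  linarith [hm ⟨i, rfl⟩, hf i x₀ x]

theorem ciInf_le_ciInf_add_mul [Nonempty ι] [PseudoMetricSpace α] {f : ι → α → ℝ} {C : ℝ}
    (hf : ∀ i x y, f i x ≤ f i y + C * dist x y) {x : α}
    (hx : BddBelow (range fun i => f i x)) (y : α) :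
    ⨅ i, f i x ≤ (⨅ i, f i y) + C * dist x y := by
  rw [← sub_le_iff_le_add]
  exact le_ciInf fun i => sub_le_iff_le_add.2 <| (ciInf_le hx i).trans (hf i x y)

theorem concaveOn_ciInf [Nonempty ι] [AddCommGroup E] [Module ℝ E] {s : Set E}
    {f : ι → E → ℝ} (hf : ∀ i, ConcaveOn ℝ s (f i))
    (hbdd : ∀ x ∈ s, BddBelow (range fun i => f i x)) :
    ConcaveOn ℝ s fun x => ⨅ i, f i x := by
  refine ⟨(hf (Classical.arbitrary ι)).1, fun x hx y hy a b ha hb hab => le_ciInf fun i => ?_⟩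
  calc a • (⨅ i, f i x) + b • ⨅ i, f i y ≤ a • f i x + b • f i y := by
        gcongr
        exacts [ciInf_le (hbdd x hx) i, ciInf_le (hbdd y hy) i]
    _ ≤ f i (a • x + b • y) := (hf i).2 hx hy ha hb hab

end Infimum

/-- Twice the Huber loss with threshold `r` (for `t ≥ 0`): quadratic up to `r`, then affine with
slope `2 r`. -/
def huber (r t : ℝ) : ℝ := t ^ 2 - max (t - r) 0 ^ 2

theorem huber_of_le {r t : ℝ} (h : t ≤ r) : huber r t = t ^ 2 := by
  simp [huber, h]

theorem huber_le_huber_add {r s t : ℝ} (hr : 0 ≤ r) (hs : 0 ≤ s) (ht : 0 ≤ t) :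
    huber r s ≤ huber r t + 2 * r * |s - t| := by
  unfold huber
  rcases le_total s r with hsr | hsr <;> rcases le_total t r with htr | htr <;>
    simp only [max_eq_left, max_eq_right, sub_nonneg, sub_nonpos, hsr, htr] <;>
    cases abs_cases (s - t) <;> nlinarith

section SupportModel

variable {E : Type*} [NormedAddCommGroup E] [InnerProductSpace ℝ E]

def supportModel (a : ℝ) (ℓ : E →L[ℝ] ℝ) (c r : ℝ) (p x : E) : ℝ :=
  a + ℓ (x - p) + c * huber r ‖x - p‖

variable {a c r K : ℝ} {ℓ : E →L[ℝ] ℝ} {p : E}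

theorem supportModel_self (hr : 0 ≤ r) : supportModel a ℓ c r p p = a := by
  simp [supportModel, huber_of_le hr]

theorem le_supportModel {b : ℝ} {x : E} (hx : ‖x - p‖ ≤ r)
    (hb : b ≤ a + ℓ (x - p) + c * ‖x - p‖ ^ 2) : b ≤ supportModel a ℓ c r p x := by
  rwa [supportModel, huber_of_le hx]

theorem supportModel_le_add_mul (hℓ : ‖ℓ‖ ≤ K) (hc : 0 ≤ c) (hr : 0 ≤ r) (x y : E) :
    supportModel a ℓ c r p x ≤ supportModel a ℓ c r p y + (K + 2 * c * r) * dist x y := by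
  have hℓxy : ℓ (x - p) - ℓ (y - p) ≤ K * dist x y := by
    rw [← map_sub, sub_sub_sub_cancel_right, dist_eq_norm]
    exact (le_abs_self _).trans ((ℓ.le_opNorm _).trans (by gcongr))
  have hnorm : |‖x - p‖ - ‖y - p‖| ≤ dist x y := by
    simpa [dist_eq_norm] using abs_norm_sub_norm_le (x - p) (y - p)
  have hhuber := huber_le_huber_add hr (norm_nonneg (x - p)) (norm_nonneg (y - p))
  have := mul_le_mul_of_nonneg_left hnorm (by positivity : 0 ≤ 2 * c * r)
  have := mul_le_mul_of_nonneg_left hhuber hc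
  unfold supportModel
  nlinarith

theorem convexOn_sq_max_norm_sub_sub (p : E) (r : ℝ) :
    ConvexOn ℝ univ fun x => max (‖x - p‖ - r) 0 ^ 2 := by
  have hdist : ConvexOn ℝ univ fun x => ‖x - p‖ - r := by
    refine ((convexOn_univ_dist p).add_const (-r)).congr fun x _ => ?_
    simp [dist_eq_norm, sub_eq_add_neg]
  exact (hdist.sup (convexOn_const 0 convex_univ)).pow (fun x _ => le_max_right _ _) 2

theorem concaveOn_supportModel_sub_sq (hc : 0 ≤ c) :
    ConcaveOn ℝ univ fun x => supportModel a ℓ c r p x - c * ‖x‖ ^ 2 := by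
  set L : E →L[ℝ] ℝ := ℓ - (2 * c) • innerSL ℝ p
  have haffine : ConcaveOn ℝ univ fun x => L x + (a - ℓ p + c * ‖p‖ ^ 2) :=
    (L.toLinearMap.concaveOn convex_univ).add_const _
  refine (haffine.sub ((convexOn_sq_max_norm_sub_sub p r).smul hc)).congr fun x _ => ?_
  simp only [Pi.sub_apply, supportModel, huber, L, map_sub, norm_sub_sq_real, smul_eq_mul,
    FunLike.coe_sub, FunLike.coe_smul, Pi.smul_apply, innerSL_apply_apply, real_inner_comm p x]
  ring

end SupportModel

theorem stmt19_general {X : Type*} [NormedAddCommGroup X] [InnerProductSpace ℝ X]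
    (P : Set X) (hP : P.Nonempty) (hPb : Bornology.IsBounded P)
    (K c : ℝ) (hc : 0 < c)
    (ψ : X → ℝ)
    (h : ∀ p ∈ P, ∃ hp : X →L[ℝ] ℝ, ‖hp‖ ≤ K ∧
      ∀ Δ : X, Δ ≠ 0 → p + Δ ∈ P → ψ (p + Δ) - ψ p - hp Δ ≤ c * ‖Δ‖ ^ 2) :
    ∃ F : X → ℝ, (∃ C : ℝ≥0, LipschitzWith C F) ∧
      (∃ C' : ℝ, 0 ≤ C' ∧ ConcaveOn ℝ univ (fun x => F x - C' / 2 * ‖x‖ ^ 2)) ∧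
      EqOn F ψ P := by
  choose ℓ hℓK hℓ using h
  have hr : 0 ≤ Metric.diam P := Metric.diam_nonneg
  let f (q : P) : X → ℝ := supportModel (ψ q) (ℓ q q.2) c (Metric.diam P) q
  have hf (q : P) (x y : X) : f q x ≤ f q y + (K + 2 * c * Metric.diam P) * dist x y :=
    supportModel_le_add_mul (hℓK q q.2) hc.le hr x y
  have hψ_le {x : X} (hx : x ∈ P) (q : P) : ψ x ≤ f q x := by
    refine le_supportModel (by simpa [dist_eq_norm] using Metric.dist_le_diam_of_mem hPb hx q.2) ?_
    rcases eq_or_ne x q with rfl | hxq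
    · simp
    · have := hℓ q q.2 (x - q) (sub_ne_zero.2 hxq) (by simpa using hx)
      rw [add_sub_cancel] at this
      linarith
  obtain ⟨p₀, hp₀⟩ := hP
  have : Nonempty P := ⟨⟨p₀, hp₀⟩⟩
  have hbdd : ∀ x, BddBelow (range fun q => f q x) :=
    bddBelow_range_of_le_add_mul hf ⟨ψ p₀, forall_mem_range.2 (hψ_le hp₀)⟩
  refine ⟨fun x => ⨅ q, f q x,
    ⟨_, LipschitzWith.of_le_add_mul' _ fun x y => ciInf_le_ciInf_add_mul hf (hbdd x) y⟩,
    ⟨2 * c, by positivity, ?_⟩,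
    fun x hx => le_antisymm ((ciInf_le (hbdd x) ⟨x, hx⟩).trans_eq (supportModel_self hr))
      (le_ciInf (hψ_le hx))⟩
  have hshift (x : X) := (hbdd x).range_comp_left (OrderIso.subRight (c * ‖x‖ ^ 2)).monotone
  refine (concaveOn_ciInf (fun q => concaveOn_supportModel_sub_sq hc.le)
    fun x _ => hshift x).congr fun x _ => ?_
  rw [mul_div_cancel_left₀ _ two_ne_zero]
  exact ((OrderIso.subRight _).map_ciInf (hbdd x)).symm

/-- A Lipschitz function on a bounded set admitting uniformly bounded approximate upper
supports extends to a Lipschitz semiconcave function on the whole space. -/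
theorem stmt19 {X : Type*} [NormedAddCommGroup X] [InnerProductSpace ℝ X]
    [FiniteDimensional ℝ X]
    (P : Set X) (hP : P.Nonempty) (hPb : Bornology.IsBounded P)
    (K c : ℝ) (hK : 0 ≤ K) (hc : 0 < c)
    (ψ : X → ℝ) (hψ : ∃ C : ℝ≥0, LipschitzOnWith C ψ P)
    (h : ∀ p ∈ P, ∃ hp : X →L[ℝ] ℝ, ‖hp‖ ≤ K ∧
      ∀ Δ : X, Δ ≠ 0 → p + Δ ∈ P → ψ (p + Δ) - ψ p - hp Δ ≤ c * ‖Δ‖ ^ 2) :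
    ∃ F : X → ℝ, (∃ C : ℝ≥0, LipschitzWith C F) ∧
      (∃ C' : ℝ, 0 ≤ C' ∧ ConcaveOn ℝ univ (fun x => F x - C' / 2 * ‖x‖ ^ 2)) ∧
      EqOn F ψ P :=
  stmt19_general P hP hPb K c hc ψ h
end
end
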